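/- Let G be a finite connected simple graph with at least one edge and let σ be a rotation system on G. For each vertex v of degree d(v), let t_v : {1, …, d(v)} → ℕ be a nondecreasing enumeration of the multiset {f_w(e) : e a dart with initial vertex v}. Then the number of faces of the embedding (G,σ) satisfies |F| ≤ Σ_{v ∈ V} ( Σ_{i=2}^{d(v)} 1/t_v[i] + 1/t_v[d(v)] ). -/

import Mathlib

/-!
Following the face permutation `φ` from a dart `e` traces the face of `e` as a facial-like walk,
so `f(e) ≥ f_w(d)` for every dart `d` on that face. The face of `σ e` also contains `ē`, since
`φ ē = σ e`, and reversing a facial-like walk gives another one, so `f_w(ē) = f_w(e)` and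
`f(σ e) ≥ f_w(e)`.

Count faces as `|F| = ∑_e 1 / f(e)` and group the darts by initial vertex. At a vertex `v` the
darts form a single `σ`-cycle. Let `a` be a dart there with `f_w(a) = t_v[d(v)]` and `b` one with
`f_w(b) = t_v[1]`. On the arc `a, σ a, …` running up to `b`, charge `1 / f(σ x)` to `1 / f_w(x)`,
and charge the other darts to themselves. The sum telescopes to
`∑_i 1 / t_v[i] + 1 / t_v[d(v)] - 1 / t_v[1]`.
-/

namespace Genus

open SimpleGraph

variable {V : Type*} (G : SimpleGraph V)

/-- The dart-reversal involution, as a permutation of the darts. -/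
def dartRev : Equiv.Perm G.Dart where
  toFun d := d.symm
  invFun d := d.symm
  left_inv d := d.symm_symm
  right_inv d := d.symm_symm

/-- A rotation system on `G`: a permutation of the darts sending each dart to a dart
with the same initial vertex, whose restriction to the darts leaving any fixed vertex
is a single cycle (equivalently, acts transitively on them). -/
def IsRotationSystem (σ : Equiv.Perm G.Dart) : Prop :=
  (∀ d : G.Dart, (σ d).fst = d.fst) ∧
    ∀ d d' : G.Dart, d.fst = d'.fst → ∃ n : ℕ, (σ ^ n) d = d'

/-- The face permutation `φ(d) = σ(d̄)` of the embedding `(G, σ)`. -/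
def facePerm (σ : Equiv.Perm G.Dart) : Equiv.Perm G.Dart := σ * dartRev G

/-- Two darts are equivalent iff they lie in the same face (same orbit of `φ`). -/
def faceSetoid (σ : Equiv.Perm G.Dart) : Setoid G.Dart :=
  ⟨(facePerm G σ).SameCycle,
    ⟨fun x => Equiv.Perm.SameCycle.refl _ x, fun h => h.symm, fun h h' => h.trans h'⟩⟩

/-- The number of faces of the embedding `(G, σ)`: the number of orbits of the
face permutation on the darts. -/
noncomputable def numFaces (σ : Equiv.Perm G.Dart) : ℕ :=
  Nat.card (Quotient (faceSetoid G σ))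

/-- `faceSize G σ e` is `f(e)`, the number of darts in the face containing `e`. -/
noncomputable def faceSize (σ : Equiv.Perm G.Dart) (e : G.Dart) : ℕ :=
  Nat.card {d : G.Dart // (facePerm G σ).SameCycle e d}

/-- The genus `1 + (|E| - |V| - |F|)/2` of the embedding `(G, σ)`. -/
noncomputable def embGenus [Fintype V] (σ : Equiv.Perm G.Dart) : ℚ :=
  1 + ((Nat.card G.edgeSet : ℚ) - (Nat.card V : ℚ) - (numFaces G σ : ℚ)) / 2

/-- The set of genera of all embeddings of `G`; the genus of `G` is its minimum. -/
def genusSet [Fintype V] : Set ℚ :=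
  {g : ℚ | ∃ σ : Equiv.Perm G.Dart, IsRotationSystem G σ ∧ embGenus G σ = g}

/-- A facial-like walk: a cyclic sequence of `k` pairwise distinct darts such that each dart
starts at the end vertex of the previous one, and a dart is followed by its reverse
iff its end vertex has degree 1. -/
def IsFacialLikeWalk [Fintype V] [DecidableRel G.Adj] {k : ℕ} (w : Fin k → G.Dart) : Prop :=
  ∃ hk : 0 < k, Function.Injective w ∧
    ∀ i : Fin k,
      (w ⟨(i + 1) % k, Nat.mod_lt _ hk⟩).fst = (w i).snd ∧
        (w ⟨(i + 1) % k, Nat.mod_lt _ hk⟩ = (w i).symm ↔ G.degree (w i).snd = 1)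

/-- `fw G e` is `f_w(e)`, the length of a shortest facial-like walk containing the dart `e`. -/
noncomputable def fw [Fintype V] [DecidableRel G.Adj] (e : G.Dart) : ℕ :=
  sInf {k : ℕ | ∃ w : Fin k → G.Dart, IsFacialLikeWalk G w ∧ ∃ i, w i = e}

end Genus

open Finset Function SimpleGraph

theorem Setoid.natCard_quotient_eq_sum_one_div {α : Type*} [Fintype α] (K : Type*)
    [DivisionRing K] [CharZero K] (s : Setoid α) :
    (Nat.card (Quotient s) : K) = ∑ x, 1 / (Nat.card {y // s x y} : K) := by
  classical
  have hclass : ∀ x, Nat.card {y // s x y} = #{y | Quotient.mk s y = Quotient.mk s x} := by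
    intro x
    rw [Nat.card_eq_fintype_card, Fintype.card_subtype]
    congr 1
    ext y
    simp only [mem_filter, mem_univ, true_and, Quotient.eq]
    exact ⟨s.symm, s.symm⟩
  rw [← sum_fiberwise univ (Quotient.mk s), Nat.card_eq_fintype_card, ← card_univ,
    card_eq_sum_ones, Nat.cast_sum]
  refine sum_congr rfl fun q _ => ?_
  obtain ⟨x, rfl⟩ := Quotient.exists_rep q
  have hpos : 0 < #{y | Quotient.mk s y = Quotient.mk s x} := card_pos.2 ⟨x, by simp⟩
  rw [sum_congr rfl fun y hy => by rw [hclass, (mem_filter.1 hy).2], sum_const, nsmul_eq_mul,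
    mul_one_div_cancel (by exact_mod_cast hpos.ne'), Nat.cast_one]

theorem Finset.sum_comp_eq_of_val_map_eq {ι κ β M : Type*} [AddCommMonoid M] {s : Finset ι}
    {t : Finset κ} {f : ι → β} {g : κ → β} (hst : s.val.map f = t.val.map g) (F : β → M) :
    ∑ i ∈ s, F (f i) = ∑ j ∈ t, F (g j) := by
  simpa only [sum_eq_multiset_sum, Multiset.map_map, Function.comp_def] using
    congrArg (fun m => (m.map F).sum) hst

namespace Equiv.Perm

variable {α : Type*} (f : Perm α)

theorem minimalPeriod_pos [Finite α] (x : α) : 0 < minimalPeriod f x :=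
  minimalPeriod_pos_of_mem_periodicPts (f.injective.mem_periodicPts x)

theorem sameCycle_iff_exists_iterate_lt_minimalPeriod [Finite α] {x y : α} :
    f.SameCycle x y ↔ ∃ i < minimalPeriod f x, f^[i] x = y := by
  refine ⟨fun h => ?_, fun ⟨i, _, hi⟩ => hi ▸ ?_⟩
  · obtain ⟨i, hi⟩ := h.exists_nat_pow_eq
    refine ⟨i % minimalPeriod f x, Nat.mod_lt _ (f.minimalPeriod_pos x), ?_⟩
    rw [iterate_mod_minimalPeriod_eq, ← hi, iterate_eq_pow]
  · rw [iterate_eq_pow]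
    exact sameCycle_pow_right.2 (SameCycle.refl f x)

theorem natCard_sameCycle [Finite α] (x : α) :
    Nat.card {y // f.SameCycle x y} = minimalPeriod f x := by
  rw [← Nat.card_fin (minimalPeriod f x)]
  refine (Nat.card_eq_of_bijective (fun i => ⟨f^[i] x,
    f.sameCycle_iff_exists_iterate_lt_minimalPeriod.2 ⟨i, i.2, rfl⟩⟩)
    ⟨fun i j hij => ?_, fun ⟨y, hy⟩ => ?_⟩).symm
  · exact Fin.ext (iterate_injOn_Iio_minimalPeriod i.2 j.2 (congrArg Subtype.val hij))
  · obtain ⟨i, hi, rfl⟩ := f.sameCycle_iff_exists_iterate_lt_minimalPeriod.1 hy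
    exact ⟨⟨i, hi⟩, rfl⟩

theorem sum_sameCycle_le_add_sub [Fintype α] [DecidableEq α] {M : Type*} [AddCommGroup M]
    [PartialOrder M] [IsOrderedAddMonoid M] {g h : α → M} (hg : ∀ x, g x ≤ h x)
    (hgf : ∀ x, g (f x) ≤ h x) {a b : α} (hab : f.SameCycle a b) :
    ∑ x with f.SameCycle a x, g x ≤ ∑ x with f.SameCycle a x, h x + h a - h b := by
  obtain ⟨r, hr, rfl⟩ := f.sameCycle_iff_exists_iterate_lt_minimalPeriod.1 hab
  have hshift :
      ∀ F : α → M, ∑ x with f.SameCycle a x, F (f x) = ∑ x with f.SameCycle a x, F x :=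
    fun F => sum_equiv f (by simp [sameCycle_apply_right]) (fun _ _ => rfl)
  set arc := (range r).image (f^[·] a)
  have harc : arc ⊆ ({x | f.SameCycle a x} : Finset α) := by
    simp only [arc, image_subset_iff, mem_filter, mem_univ, true_and]
    exact fun i hi =>
      f.sameCycle_iff_exists_iterate_lt_minimalPeriod.2 ⟨i, (mem_range.1 hi).trans hr, rfl⟩
  have htelescope : ∑ x ∈ arc, (h x - h (f x)) = h a - h (f^[r] a) := by
    rw [sum_image fun i hi j hj hij => iterate_injOn_Iio_minimalPeriod
      ((mem_range.1 hi).trans hr) ((mem_range.1 hj).trans hr) hij]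
    simp only [← iterate_succ_apply' f]
    exact sum_range_sub' (fun i => h (f^[i] a)) r
  calc ∑ x with f.SameCycle a x, g x = ∑ x with f.SameCycle a x, g (f x) := (hshift g).symm
    _ ≤ ∑ x with f.SameCycle a x, (h (f x) + if x ∈ arc then h x - h (f x) else 0) := by
      refine sum_le_sum fun x _ => ?_
      split_ifs
      · simpa using hgf x
      · simpa using hg (f x)
    _ = _ := by
      rw [sum_add_distrib, sum_ite_mem, inter_eq_right.2 harc, hshift h, htelescope,
        add_sub_assoc]

end Equiv.Perm

namespace Genus

variable {V : Type*} {G : SimpleGraph V} {σ : Equiv.Perm G.Dart}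

theorem facePerm_apply (d : G.Dart) : facePerm G σ d = σ d.symm := rfl

theorem IsRotationSystem.fst_pow_apply (hσ : IsRotationSystem G σ) (n : ℕ) (d : G.Dart) :
    ((σ ^ n) d).fst = d.fst := by
  induction n with
  | zero => rfl
  | succ n ih => rw [pow_succ', Equiv.Perm.mul_apply, hσ.1, ih]

theorem IsRotationSystem.facePerm_fst (hσ : IsRotationSystem G σ) (d : G.Dart) :
    (facePerm G σ d).fst = d.snd :=
  hσ.1 d.symm

variable [Fintype V] [DecidableRel G.Adj]

variable (G) in
def facialLikeWalkLengths (e : G.Dart) : Set ℕ :=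
  {k | ∃ w : Fin k → G.Dart, IsFacialLikeWalk G w ∧ ∃ i, w i = e}

theorem IsFacialLikeWalk.reverse {k : ℕ} {w : Fin k → G.Dart} (hw : IsFacialLikeWalk G w) :
    IsFacialLikeWalk G fun i => (w i.rev).symm := by
  obtain ⟨hk, hinj, hstep⟩ := hw
  refine ⟨hk, fun i j hij => Fin.rev_injective (hinj (Dart.symm_involutive.injective hij)),
    fun i => ?_⟩
  -- `j` is the old index of the dart that the reversed walk visits right after position `i`.
  set j : Fin k := Fin.rev ⟨(i + 1) % k, Nat.mod_lt _ hk⟩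
  have hj : (⟨(j + 1) % k, Nat.mod_lt _ hk⟩ : Fin k) = i.rev := by
    ext
    simp only [j, Fin.val_rev]
    rcases Nat.lt_or_ge (i + 1) k with hi | hi
    · rw [Nat.mod_eq_of_lt hi, Nat.mod_eq_of_lt (by omega)]
      omega
    · rw [show (i : ℕ) + 1 = k by omega, Nat.mod_self, zero_add, Nat.sub_add_cancel hk,
        Nat.mod_self, Nat.sub_self]
  obtain ⟨hfst, hdeg⟩ := hstep j
  rw [hj] at hfst hdeg
  change (w j).symm.fst = (w i.rev).fst ∧
    ((w j).symm = (w i.rev).symm.symm ↔ G.degree (w i.rev).fst = 1)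
  refine ⟨hfst.symm, ?_⟩
  rw [Dart.symm_symm, eq_comm, hfst]
  exact hdeg

theorem symm_mem_facialLikeWalkLengths {e : G.Dart} {k : ℕ}
    (hk : k ∈ facialLikeWalkLengths G e) : k ∈ facialLikeWalkLengths G e.symm := by
  obtain ⟨w, hw, i, rfl⟩ := hk
  exact ⟨_, hw.reverse, i.rev, by simp⟩

theorem fw_symm (e : G.Dart) : fw G e.symm = fw G e := by
  change sInf (facialLikeWalkLengths G e.symm) = sInf (facialLikeWalkLengths G e)
  refine congrArg sInf
    (Set.Subset.antisymm (fun _ hk => ?_) fun _ => symm_mem_facialLikeWalkLengths)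
  simpa using symm_mem_facialLikeWalkLengths hk

theorem faceSize_eq_minimalPeriod (e : G.Dart) :
    faceSize G σ e = minimalPeriod (facePerm G σ) e :=
  (facePerm G σ).natCard_sameCycle e

theorem numFaces_eq_sum_one_div_faceSize :
    (numFaces G σ : ℚ) = ∑ e, 1 / (faceSize G σ e : ℚ) :=
  Setoid.natCard_quotient_eq_sum_one_div ℚ (faceSetoid G σ)

namespace IsRotationSystem

theorem sameCycle_iff (hσ : IsRotationSystem G σ) {d e : G.Dart} :
    σ.SameCycle d e ↔ e.fst = d.fst := by
  refine ⟨fun h => ?_, fun h => ?_⟩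
  · obtain ⟨n, rfl⟩ := h.exists_nat_pow_eq
    exact hσ.fst_pow_apply n d
  · obtain ⟨n, rfl⟩ := hσ.2 d e h.symm
    exact Equiv.Perm.sameCycle_pow_right.2 (Equiv.Perm.SameCycle.refl σ d)

variable [DecidableEq V]

theorem apply_eq_self_iff (hσ : IsRotationSystem G σ) (d : G.Dart) :
    σ d = d ↔ G.degree d.fst = 1 := by
  rw [← G.dart_fst_fiber_card_eq_degree, card_eq_one]
  refine ⟨fun h => ⟨d, eq_singleton_iff_unique_mem.2 ⟨by simp, fun e he => ?_⟩⟩, ?_⟩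
  · obtain ⟨n, rfl⟩ := hσ.2 d e (mem_filter.1 he).2.symm
    exact Equiv.Perm.pow_apply_eq_self_of_apply_eq_self h n
  · rintro ⟨a, ha⟩
    have hd : d ∈ ({a} : Finset G.Dart) := ha ▸ by simp
    have hσd : σ d ∈ ({a} : Finset G.Dart) := ha ▸ by simp [hσ.1]
    rw [mem_singleton] at hd hσd
    rw [hσd, hd]

theorem facePerm_eq_symm_iff (hσ : IsRotationSystem G σ) (d : G.Dart) :
    facePerm G σ d = d.symm ↔ G.degree d.snd = 1 :=
  hσ.apply_eq_self_iff d.symm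

theorem isFacialLikeWalk_face (hσ : IsRotationSystem G σ) (e : G.Dart) :
    IsFacialLikeWalk G fun i : Fin (minimalPeriod (facePerm G σ) e) => (facePerm G σ)^[i] e := by
  refine ⟨(facePerm G σ).minimalPeriod_pos e,
    fun i j hij => Fin.ext (iterate_injOn_Iio_minimalPeriod i.2 j.2 hij), fun i => ?_⟩
  have hnext : (facePerm G σ)^[(i + 1) % minimalPeriod (facePerm G σ) e] e =
      facePerm G σ ((facePerm G σ)^[i] e) := by
    rw [iterate_mod_minimalPeriod_eq, iterate_succ_apply']
  simp only [hnext]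
  exact ⟨hσ.facePerm_fst _, hσ.facePerm_eq_symm_iff _⟩

theorem faceSize_mem_facialLikeWalkLengths (hσ : IsRotationSystem G σ) {e d : G.Dart}
    (h : (facePerm G σ).SameCycle e d) : faceSize G σ e ∈ facialLikeWalkLengths G d := by
  obtain ⟨i, hi, rfl⟩ := (facePerm G σ).sameCycle_iff_exists_iterate_lt_minimalPeriod.1 h
  rw [faceSize_eq_minimalPeriod]
  exact ⟨_, hσ.isFacialLikeWalk_face e, ⟨i, hi⟩, rfl⟩

theorem fw_pos (hσ : IsRotationSystem G σ) (e : G.Dart) : 0 < fw G e := by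
  obtain ⟨w, ⟨hk, -⟩, -⟩ :=
    Nat.sInf_mem ⟨_, hσ.faceSize_mem_facialLikeWalkLengths (.refl _ e)⟩
  exact hk

theorem one_div_faceSize_le (hσ : IsRotationSystem G σ) {e d : G.Dart}
    (h : (facePerm G σ).SameCycle e d) : 1 / (faceSize G σ e : ℚ) ≤ 1 / (fw G d : ℚ) :=
  one_div_le_one_div_of_le (by exact_mod_cast hσ.fw_pos d)
    (by exact_mod_cast Nat.sInf_le (hσ.faceSize_mem_facialLikeWalkLengths h))

theorem one_div_faceSize_apply_le (hσ : IsRotationSystem G σ) (e : G.Dart) :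
    1 / (faceSize G σ (σ e) : ℚ) ≤ 1 / (fw G e : ℚ) := by
  rw [← fw_symm]
  exact hσ.one_div_faceSize_le (Equiv.Perm.SameCycle.symm ⟨1, by simp [facePerm_apply]⟩)

theorem sum_fiber_one_div_faceSize_le (hσ : IsRotationSystem G σ) (v : V) (t : ℕ → ℕ)
    (ht : (Icc 1 (G.degree v)).val.map t = ({e : G.Dart | e.fst = v} : Finset _).val.map (fw G)) :
    ∑ e : G.Dart with e.fst = v, 1 / (faceSize G σ e : ℚ) ≤
      (∑ i ∈ Icc 2 (G.degree v), 1 / (t i : ℚ)) + 1 / (t (G.degree v) : ℚ) := by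
  obtain hd | hd := Nat.eq_zero_or_pos (G.degree v)
  · rw [card_eq_zero.1 ((G.dart_fst_fiber_card_eq_degree v).trans hd), sum_empty]
    positivity
  have hmem : ∀ i ∈ Icc 1 (G.degree v), ∃ e : G.Dart, e.fst = v ∧ fw G e = t i := by
    intro i hi
    have hti : t i ∈ (Icc 1 (G.degree v)).val.map t := Multiset.mem_map_of_mem t hi
    simpa [ht] using hti
  obtain ⟨a, rfl, ha⟩ := hmem (G.degree v) (right_mem_Icc.2 hd)
  obtain ⟨b, hb, hb'⟩ := hmem 1 (left_mem_Icc.2 hd)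
  have hfiber :
      ({e : G.Dart | e.fst = a.fst} : Finset _) = ({e | σ.SameCycle a e} : Finset _) := by
    ext e
    simp [hσ.sameCycle_iff]
  have hsum := sum_comp_eq_of_val_map_eq ht fun n : ℕ => 1 / (n : ℚ)
  rw [hfiber] at hsum ⊢
  calc ∑ e with σ.SameCycle a e, 1 / (faceSize G σ e : ℚ)
      ≤ ∑ e with σ.SameCycle a e, 1 / (fw G e : ℚ) + 1 / (fw G a : ℚ) - 1 / (fw G b : ℚ) :=
        σ.sum_sameCycle_le_add_sub (fun e => hσ.one_div_faceSize_le (.refl _ e))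
          hσ.one_div_faceSize_apply_le (hσ.sameCycle_iff.2 hb)
    _ = _ := by
      rw [← hsum, ha, hb', ← add_sum_Ioc_eq_sum_Icc hd, ← Icc_add_one_left_eq_Ioc,
        one_add_one_eq_two]
      ring

end IsRotationSystem

end Genus

open SimpleGraph in
theorem numFaces_le_second_bound_general
    {V : Type*} [Fintype V] [DecidableEq V] (G : SimpleGraph V) [DecidableRel G.Adj]
    (σ : Equiv.Perm G.Dart) (hσ : Genus.IsRotationSystem G σ)
    (t : V → ℕ → ℕ)
    (ht_enum : ∀ v : V, (Finset.Icc 1 (G.degree v)).val.map (t v) =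
      (Finset.univ.filter (fun e : G.Dart => e.fst = v)).val.map (Genus.fw G)) :
    (Genus.numFaces G σ : ℚ) ≤
      ∑ v : V,
        ((∑ i ∈ Finset.Icc 2 (G.degree v), 1 / (t v i : ℚ)) + 1 / (t v (G.degree v) : ℚ)) := by
  calc (Genus.numFaces G σ : ℚ) = ∑ e, 1 / (Genus.faceSize G σ e : ℚ) :=
        Genus.numFaces_eq_sum_one_div_faceSize
    _ = ∑ v, ∑ e : G.Dart with e.fst = v, 1 / (Genus.faceSize G σ e : ℚ) :=
        (Finset.sum_fiberwise _ _ _).symm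
    _ ≤ _ := Finset.sum_le_sum fun v _ => hσ.sum_fiber_one_div_faceSize_le v (t v) (ht_enum v)

open SimpleGraph in
/-- For each vertex `v` of degree `d(v)`, let `t v` be a nondecreasing
enumeration (indexed by `{1, …, d(v)}`) of the multiset
`{f_w(e) : e a dart with initial vertex v}`. Then the number of faces of `(G, σ)` satisfies
`|F| ≤ ∑_{v ∈ V} (∑_{i=2}^{d(v)} 1 / t_v[i] + 1 / t_v[d(v)])`. -/
theorem numFaces_le_second_bound
    {V : Type*} [Fintype V] [DecidableEq V] (G : SimpleGraph V) [DecidableRel G.Adj]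
    (hconn : G.Connected) (hE : G.edgeSet.Nonempty)
    (σ : Equiv.Perm G.Dart) (hσ : Genus.IsRotationSystem G σ)
    (t : V → ℕ → ℕ)
    (ht_mono : ∀ v : V, MonotoneOn (t v) (Set.Icc 1 (G.degree v)))
    (ht_enum : ∀ v : V, (Finset.Icc 1 (G.degree v)).val.map (t v) =
      (Finset.univ.filter (fun e : G.Dart => e.fst = v)).val.map (Genus.fw G)) :
    (Genus.numFaces G σ : ℚ) ≤
      ∑ v : V,
        ((∑ i ∈ Finset.Icc 2 (G.degree v), 1 / (t v i : ℚ)) + 1 / (t v (G.degree v) : ℚ)) :=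
  numFaces_le_second_bound_general G σ hσ t ht_enum
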